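/- arXiv:2407.13045 — 2 statements merged into one kernel-verified Lean document; each statement's English description precedes it below -/
import Mathlib

section
/- (Dynamic Programming Principle, monotonicity part) For every φ ∈ L²(μ,Ω;ℝⁿ), every 0 ≤ s₁ ≤ s₂ ≤ T, and every admissible control u on [s₁, s₂], the value function satisfies V(s₁, φ) ≤ V(s₂, x_{φ,u}(s₂, ·)), where x_{φ,u} is the trajectory starting from φ at time s₁ driven by u. -/
open MeasureTheory Set

/-- An admissible process `(x, u)` on `[s, T]` for the average control problem:
`u` is measurable, takes values in `U t` for a.e. `t ∈ [s,T]`, and `x` satisfies the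
integral equation `x(t,ω) = φ(ω) + ∫_s^t f(σ, x(σ,ω), u(σ), ω) dσ` on `[s,T]`. -/
def IsProcess {n m : ℕ} {Ω : Type*} [MeasurableSpace Ω]
    (f : ℝ → EuclideanSpace ℝ (Fin n) → EuclideanSpace ℝ (Fin m) → Ω →
      EuclideanSpace ℝ (Fin n))
    (U : ℝ → Set (EuclideanSpace ℝ (Fin m))) (s T : ℝ)
    (φ : Ω → EuclideanSpace ℝ (Fin n))
    (x : ℝ → Ω → EuclideanSpace ℝ (Fin n))
    (u : ℝ → EuclideanSpace ℝ (Fin m)) : Prop :=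
  Measurable u ∧ (∀ᵐ t ∂(volume.restrict (Icc s T)), u t ∈ U t) ∧
    ∀ t ∈ Icc s T, ∀ ω, x t ω = φ ω + ∫ σ in Ioc s t, f σ (x σ ω) (u σ) ω

/-- The terminal cost functional `𝒥(ψ) = ∫_Ω g(ψ(ω), ω) dμ(ω)`. -/
noncomputable def termCost {n : ℕ} {Ω : Type*} [MeasurableSpace Ω] (μ : Measure Ω)
    (g : EuclideanSpace ℝ (Fin n) → Ω → ℝ)
    (ψ : Ω → EuclideanSpace ℝ (Fin n)) : ℝ :=
  ∫ ω, g (ψ ω) ω ∂μ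

/-- The value function `V(s,φ)`: infimum of the average terminal cost over all
admissible processes on `[s,T]` starting from `φ` at time `s`. -/
noncomputable def valueFn {n m : ℕ} {Ω : Type*} [MeasurableSpace Ω] (μ : Measure Ω)
    (f : ℝ → EuclideanSpace ℝ (Fin n) → EuclideanSpace ℝ (Fin m) → Ω →
      EuclideanSpace ℝ (Fin n))
    (U : ℝ → Set (EuclideanSpace ℝ (Fin m)))
    (g : EuclideanSpace ℝ (Fin n) → Ω → ℝ) (T s : ℝ)
    (φ : Ω → EuclideanSpace ℝ (Fin n)) : ℝ :=
  sInf { r | ∃ x u, IsProcess f U s T φ x u ∧ r = termCost μ g (x T) }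

/-!
Concatenating a process on `[s₁, s₂]` with any admissible process on `[s₂, T]` started at
`x(s₂)` gives an admissible process on `[s₁, T]` with the same terminal state, so the set of
costs defining `V(s₂, x(s₂))` is contained in the one defining `V(s₁, φ)`. Comparing the infima
needs the larger set to be bounded below and the smaller one to be nonempty. The first follows
from Grönwall's bound `|x(T)| ≤ (1 + |φ|) e^{c(T - s)}`, the quadratic lower bound on `g` and
`φ ∈ L²`; the second from a measurable selection of `U` and a Picard fixed point.
-/

open Metric Filter Topology Real
open scoped NNReal

theorem measurable_comp_of_caratheodory {α X Y : Type*} [MeasurableSpace α]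
    [TopologicalSpace X] [TopologicalSpace.MetrizableSpace X] [SecondCountableTopology X]
    [MeasurableSpace X] [OpensMeasurableSpace X] [TopologicalSpace Y]
    [TopologicalSpace.PseudoMetrizableSpace Y] [MeasurableSpace Y] [BorelSpace Y]
    {F : α → X → Y} (hmeas : ∀ p, Measurable (F · p))
    (hcont : ∀ t, Continuous (F t)) {w : α → X} (hw : Measurable w) :
    Measurable fun t => F t (w t) :=
  (measurable_uncurry_of_continuous_of_measurable (u := fun p t => F t p) hcont hmeas).comp
    (hw.prodMk measurable_id)

theorem le_mul_exp_of_le_add_integral {u : ℝ → ℝ} {A c s e : ℝ} (hc : 0 ≤ c) (hse : s ≤ e)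
    (hu : ContinuousOn u (Icc s e)) (h : ∀ t ∈ Icc s e, u t ≤ A + c * ∫ σ in s..t, u σ) :
    ∀ t ∈ Icc s e, u t ≤ A * exp (c * (t - s)) := by
  set ū : ℝ → ℝ := fun t => u (projIcc s e hse t)
  have hū : Continuous ū :=
    hu.comp_continuous (continuous_subtype_val.comp continuous_projIcc) fun t =>
      (projIcc s e hse t).2
  have hūu : EqOn ū u (Icc s e) := fun t ht => by simp only [ū, projIcc_of_mem hse ht]
  set v : ℝ → ℝ := fun t => ∫ σ in s..t, ū σ
  have hv : ∀ t, HasDerivAt v (ū t) t := fun t =>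
    intervalIntegral.integral_hasDerivAt_right (hū.intervalIntegrable _ _)
      (hū.stronglyMeasurableAtFilter _ _) hū.continuousAt
  have hvu : ∀ t ∈ Icc s e, v t = ∫ σ in s..t, u σ := fun t ht =>
    intervalIntegral.integral_congr fun σ hσ => hūu <| by
      rw [uIcc_of_le ht.1] at hσ
      exact ⟨hσ.1, hσ.2.trans ht.2⟩
  have hgronwall := le_gronwallBound_of_liminf_deriv_right_le (f := v) (f' := ū) (δ := 0)
    (K := c) (ε := A) (a := s) (b := e) (fun t _ => (hv t).continuousAt.continuousWithinAt)
    (fun t _ r hr => (hv t).hasDerivWithinAt.liminf_right_slope_le hr) (by simp [v])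
    (fun t ht => by
      rw [hūu (Ico_subset_Icc_self ht), hvu t (Ico_subset_Icc_self ht), add_comm]
      exact h t (Ico_subset_Icc_self ht))
  have hclosed : ∀ x, A + c * gronwallBound 0 c A x = A * exp (c * x) := by
    intro x
    rcases eq_or_ne c 0 with rfl | hc0
    · simp
    · rw [gronwallBound_of_K_ne_0 hc0]
      field_simp
      ring
  intro t ht
  calc u t ≤ A + c * v t := hvu t ht ▸ h t ht
    _ ≤ A + c * gronwallBound 0 c A (t - s) := by gcongr; exact hgronwall t ht
    _ = A * exp (c * (t - s)) := hclosed _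

theorem integrableOn_Ioc_csSup {E : Type*} [NormedAddCommGroup E] {G : ℝ → E} {A : Set ℝ}
    {s C : ℝ} (hsA : s ∈ A) (hA : BddAbove A)
    (hint : ∀ t ∈ A, IntegrableOn G (Ioc s t)) (hG : ∀ t ∈ A, ∀ σ ∈ Ioc s t, ‖G σ‖ ≤ C)
    (hC : 0 ≤ C) : IntegrableOn G (Ioc s (sSup A)) := by
  obtain ⟨b, -, hb, hbA⟩ := exists_seq_tendsto_sSup ⟨s, hsA⟩ hA
  refine integrableOn_Ioc_of_intervalIntegral_norm_bounded (a := fun _ => s)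
    (I := C * (sSup A - s)) (fun i => hint _ (hbA i)) tendsto_const_nhds hb
    (Eventually.of_forall fun i => ?_)
  calc ∫ σ in Ioc s (b i), ‖G σ‖ ≤ C * volume.real (Ioc s (b i)) :=
        (Real.le_norm_self _).trans <| norm_setIntegral_le_of_norm_le_const measure_Ioc_lt_top
          fun σ hσ => by simpa using hG _ (hbA i) σ hσ
    _ ≤ C * (sSup A - s) := by
        rw [Real.volume_real_Ioc]
        gcongr
        exact max_le (by linarith [le_csSup hA (hbA i)]) (by linarith [le_csSup hA hsA])

section IntegralEquation

variable {E : Type*} [NormedAddCommGroup E] [NormedSpace ℝ E]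

theorem norm_le_of_eq_add_integral {y G : ℝ → E} {ψ : E} {c s e : ℝ} (hc : 0 ≤ c)
    (hG : IntegrableOn G (Ioc s e)) (hGy : ∀ σ ∈ Ioc s e, ‖G σ‖ ≤ c * (1 + ‖y σ‖))
    (hy : ∀ t ∈ Icc s e, y t = ψ + ∫ σ in Ioc s t, G σ) :
    ∀ t ∈ Icc s e, ‖y t‖ ≤ (1 + ‖ψ‖) * exp (c * (e - s)) := by
  intro t ht
  have hse : s ≤ e := ht.1.trans ht.2
  have hycont : ContinuousOn y (Icc s e) :=
    (continuousOn_const.add (intervalIntegral.continuousOn_primitive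
      ((integrableOn_Icc_iff_integrableOn_Ioc (by simp)).2 hG))).congr hy
  have hbound : ∀ t ∈ Icc s e, 1 + ‖y t‖ ≤ (1 + ‖ψ‖) + c * ∫ σ in s..t, (1 + ‖y σ‖) := by
    intro t ht
    have hsub : Ioc s t ⊆ Ioc s e := Ioc_subset_Ioc_right ht.2
    have hint : IntegrableOn (fun σ => 1 + ‖y σ‖) (Ioc s t) :=
      ((continuousOn_const.add hycont.norm).mono (Icc_subset_Icc_right ht.2)).integrableOn_Icc
        |>.mono_set Ioc_subset_Icc_self
    calc 1 + ‖y t‖ ≤ 1 + (‖ψ‖ + ∫ σ in Ioc s t, ‖G σ‖) := by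
          rw [hy t ht]
          gcongr
          exact (norm_add_le _ _).trans (by gcongr; exact norm_integral_le_integral_norm _)
      _ ≤ 1 + (‖ψ‖ + ∫ σ in Ioc s t, c * (1 + ‖y σ‖)) := by
          gcongr 1 + (_ + ?_)
          exact setIntegral_mono_on (hG.mono_set hsub).norm (hint.const_mul c) measurableSet_Ioc
            fun σ hσ => hGy σ (hsub hσ)
      _ = (1 + ‖ψ‖) + c * ∫ σ in s..t, (1 + ‖y σ‖) := by
          rw [integral_const_mul, intervalIntegral.integral_of_le ht.1]
          ring
  have h := le_mul_exp_of_le_add_integral (u := fun t => 1 + ‖y t‖) hc hse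
    (continuousOn_const.add hycont.norm) hbound t ht
  calc ‖y t‖ ≤ (1 + ‖ψ‖) * exp (c * (t - s)) := by linarith
    _ ≤ (1 + ‖ψ‖) * exp (c * (e - s)) := by gcongr; exact ht.2

theorem integrableOn_of_eq_add_integral {F : ℝ → E → E} {y : ℝ → E} {ψ : E} {c s e : ℝ}
    (hF : ∀ σ p, ‖F σ p‖ ≤ c * (1 + ‖p‖))
    (hFψ : AEStronglyMeasurable (fun σ => F σ ψ) (volume.restrict (Ioc s e)))
    (hy : ∀ t ∈ Icc s e, y t = ψ + ∫ σ in Ioc s t, F σ (y σ)) :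
    IntegrableOn (fun σ => F σ (y σ)) (Ioc s e) := by
  rcases lt_or_ge e s with hes | hse
  · simp [Ioc_eq_empty_of_le hes.le]
  have hc : 0 ≤ c :=
    nonneg_of_mul_nonneg_left ((norm_nonneg _).trans (hF s ψ)) (by positivity)
  set G := fun σ => F σ (y σ)
  set A := {t ∈ Icc s e | IntegrableOn G (Ioc s t)}
  have hsA : s ∈ A := ⟨left_mem_Icc.2 hse, by simp⟩
  have hAbdd : BddAbove A := ⟨e, fun t ht => ht.1.2⟩
  set τ := sSup A
  have hsτ : s ≤ τ := le_csSup hAbdd hsA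
  have hτe : τ ≤ e := csSup_le ⟨s, hsA⟩ fun t ht => ht.1.2
  set B := (1 + ‖ψ‖) * exp (c * (e - s)) with hB
  have hGA : ∀ t ∈ A, ∀ σ ∈ Ioc s t, ‖G σ‖ ≤ c * (1 + B) := by
    intro t ht σ hσ
    have hyσ := norm_le_of_eq_add_integral hc ht.2 (fun σ _ => hF σ (y σ))
      (fun t' ht' => hy t' ⟨ht'.1, ht'.2.trans ht.1.2⟩) σ (Ioc_subset_Icc_self hσ)
    calc ‖G σ‖ ≤ c * (1 + ‖y σ‖) := hF σ (y σ)
      _ ≤ c * (1 + B) := by gcongr; exact hyσ.trans (by rw [hB]; gcongr; exact ht.1.2)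
  have hGτ : IntegrableOn G (Ioc s τ) :=
    integrableOn_Ioc_csSup hsA hAbdd (fun t ht => ht.2) hGA (by positivity)
  -- past `τ` the integrand is not integrable, so the junk value `0` of the integral freezes `y`
  have hyψ : ∀ t ∈ Ioc τ e, y t = ψ := by
    intro t ht
    have hnot : ¬ IntegrableOn G (Ioc s t) := fun hint =>
      (le_csSup hAbdd ⟨⟨hsτ.trans ht.1.le, ht.2⟩, hint⟩).not_gt ht.1
    rw [hy t ⟨hsτ.trans ht.1.le, ht.2⟩, integral_undef hnot, add_zero]
  have hGτe : IntegrableOn G (Ioc τ e) := by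
    have hFψ' : IntegrableOn (fun σ => F σ ψ) (Ioc τ e) :=
      Integrable.mono' (integrableOn_const measure_Ioc_lt_top.ne)
        (hFψ.mono_measure (Measure.restrict_mono (Ioc_subset_Ioc_left hsτ) le_rfl))
        (ae_of_all _ fun σ => hF σ ψ)
    exact hFψ'.congr_fun (fun σ hσ => by simp only [G, hyψ σ hσ]) measurableSet_Ioc
  rw [← Ioc_union_Ioc_eq_Ioc hsτ hτe]
  exact hGτ.union hGτe

theorem ite_eq_add_integral {x y G₁ G₂ : ℝ → E} {ψ : E} {a b e : ℝ} (hab : a ≤ b)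
    (hG₁ : IntegrableOn G₁ (Ioc a b)) (hG₂ : IntegrableOn G₂ (Ioc b e))
    (hx : ∀ t ∈ Icc a b, x t = ψ + ∫ σ in Ioc a t, G₁ σ)
    (hy : ∀ t ∈ Icc b e, y t = x b + ∫ σ in Ioc b t, G₂ σ) :
    ∀ t ∈ Icc a e,
      (if t ≤ b then x t else y t) = ψ + ∫ σ in Ioc a t, if σ ≤ b then G₁ σ else G₂ σ := by
  intro t ht
  split_ifs with htb
  · rw [hx t ⟨ht.1, htb⟩]
    congr 1
    exact setIntegral_congr_fun measurableSet_Ioc fun σ hσ => (if_pos (hσ.2.trans htb)).symm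
  · replace htb := not_le.1 htb
    have hleft : EqOn (fun σ => if σ ≤ b then G₁ σ else G₂ σ) G₁ (Ioc a b) :=
      fun σ hσ => if_pos hσ.2
    have hright : EqOn (fun σ => if σ ≤ b then G₁ σ else G₂ σ) G₂ (Ioc b t) :=
      fun σ hσ => if_neg (not_le.2 hσ.1)
    have hG₂' : IntegrableOn G₂ (Ioc b t) := hG₂.mono_set (Ioc_subset_Ioc_right ht.2)
    rw [hy t ⟨htb.le, ht.2⟩, hx b ⟨hab, le_rfl⟩, add_assoc, ← Ioc_union_Ioc_eq_Ioc hab htb.le,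
      setIntegral_union (Ioc_disjoint_Ioc_of_le le_rfl) measurableSet_Ioc
        (hG₁.congr_fun hleft.symm measurableSet_Ioc)
        (hG₂'.congr_fun hright.symm measurableSet_Ioc),
      setIntegral_congr_fun measurableSet_Ioc hleft,
      setIntegral_congr_fun measurableSet_Ioc hright]

end IntegralEquation

structure IsLipschitzCaratheodory {E : Type*} [NormedAddCommGroup E] [MeasurableSpace E]
    (F : ℝ → E → E) (K : ℝ≥0) (c : ℝ) : Prop where
  measurable_apply : ∀ p, Measurable (F · p)
  lipschitzWith : ∀ t, LipschitzWith K (F t)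
  norm_le : ∀ t p, ‖F t p‖ ≤ c * (1 + ‖p‖)

namespace IsLipschitzCaratheodory

variable {E : Type*} [NormedAddCommGroup E] [MeasurableSpace E] {F : ℝ → E → E} {K : ℝ≥0}
  {c : ℝ}

theorem nonneg (hF : IsLipschitzCaratheodory F K c) : 0 ≤ c := by
  simpa using (norm_nonneg _).trans (hF.norm_le 0 0)

variable [BorelSpace E] [SecondCountableTopology E]

theorem measurable_comp (hF : IsLipschitzCaratheodory F K c) {y : ℝ → E} (hy : Measurable y) :
    Measurable fun σ => F σ (y σ) :=
  measurable_comp_of_caratheodory hF.measurable_apply (fun t => (hF.lipschitzWith t).continuous)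
    hy

variable {s T : ℝ}

theorem integrableOn_comp_IccExtend (hF : IsLipschitzCaratheodory F K c) (hsT : s ≤ T)
    (y : C(Icc s T, E)) :
    IntegrableOn (fun σ => F σ (IccExtend hsT y σ)) (Icc s T) := by
  have hc := hF.nonneg
  refine Integrable.mono' (integrableOn_const (C := c * (1 + ‖y‖)) measure_Icc_lt_top.ne)
    (hF.measurable_comp
      ((map_continuous y).comp continuous_projIcc).measurable).aestronglyMeasurable
    (ae_of_all _ fun σ => (hF.norm_le σ _).trans ?_)
  gcongr
  exact y.norm_coe_le_norm _

variable [NormedSpace ℝ E]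

noncomputable def picard (hF : IsLipschitzCaratheodory F K c) (hsT : s ≤ T) (ψ : E)
    (y : C(Icc s T, E)) : C(Icc s T, E) where
  toFun t := ψ + ∫ σ in Ioc s t, F σ (IccExtend hsT y σ)
  continuous_toFun := continuous_const.add
    (intervalIntegral.continuousOn_primitive (hF.integrableOn_comp_IccExtend hsT y)).domRestrict

theorem picard_apply (hF : IsLipschitzCaratheodory F K c) (hsT : s ≤ T) (ψ : E)
    (y : C(Icc s T, E)) (t : Icc s T) :
    hF.picard hsT ψ y t = ψ + ∫ σ in Ioc s t, F σ (IccExtend hsT y σ) :=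
  rfl

theorem dist_picard_iterate_apply_le (hF : IsLipschitzCaratheodory F K c) (hsT : s ≤ T)
    (ψ : E) (N : ℕ) (y z : C(Icc s T, E)) (t : Icc s T) :
    dist ((hF.picard hsT ψ)^[N] y t) ((hF.picard hsT ψ)^[N] z t) ≤
      (K * (t - s)) ^ N / N.factorial * dist y z := by
  induction N generalizing t with
  | zero => simpa using ContinuousMap.dist_apply_le_dist t
  | succ N ih =>
    rw [Function.iterate_succ_apply', Function.iterate_succ_apply']
    set a := (hF.picard hsT ψ)^[N] y
    set b := (hF.picard hsT ψ)^[N] z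
    have hst : s ≤ t := t.2.1
    have hsub : Ioc s t ⊆ Icc s T := fun σ hσ => ⟨hσ.1.le, hσ.2.trans t.2.2⟩
    have hint : ∀ w : C(Icc s T, E),
        IntegrableOn (fun σ => F σ (IccExtend hsT w σ)) (Ioc s t) :=
      fun w => (hF.integrableOn_comp_IccExtend hsT w).mono_set hsub
    have hdiff : ∀ σ ∈ Ioc s (t : ℝ),
        ‖F σ (IccExtend hsT a σ) - F σ (IccExtend hsT b σ)‖ ≤
          K ^ (N + 1) * dist y z / N.factorial * (σ - s) ^ N := by
      intro σ hσ
      rw [← dist_eq_norm, IccExtend_of_mem hsT a (hsub hσ), IccExtend_of_mem hsT b (hsub hσ)]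
      calc dist (F σ (a ⟨σ, hsub hσ⟩)) (F σ (b ⟨σ, hsub hσ⟩))
          ≤ K * dist (a ⟨σ, hsub hσ⟩) (b ⟨σ, hsub hσ⟩) :=
            (hF.lipschitzWith σ).dist_le_mul _ _
        _ ≤ K * ((K * (σ - s)) ^ N / N.factorial * dist y z) := by gcongr; exact ih _
        _ = K ^ (N + 1) * dist y z / N.factorial * (σ - s) ^ N := by rw [mul_pow]; ring
    calc dist (hF.picard hsT ψ a t) (hF.picard hsT ψ b t)
        = ‖∫ σ in s..t, (F σ (IccExtend hsT a σ) - F σ (IccExtend hsT b σ))‖ := by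
          rw [dist_eq_norm, picard_apply, picard_apply, add_sub_add_left_eq_sub,
            ← integral_sub (hint a) (hint b), intervalIntegral.integral_of_le hst]
      _ ≤ ∫ σ in s..t, K ^ (N + 1) * dist y z / N.factorial * (σ - s) ^ N :=
          intervalIntegral.norm_integral_le_of_norm_le hst (ae_of_all _ hdiff)
            (by apply Continuous.intervalIntegrable; fun_prop)
      _ = (K * (t - s)) ^ (N + 1) / (N + 1).factorial * dist y z := by
          rw [intervalIntegral.integral_const_mul,
            intervalIntegral.integral_comp_sub_right (fun σ => σ ^ N), integral_pow, sub_self,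
            zero_pow N.succ_ne_zero, Nat.factorial_succ]
          push_cast
          field_simp
          rw [mul_pow]
          ring

theorem exists_eq_add_integral (hF : IsLipschitzCaratheodory F K c) [CompleteSpace E] (ψ : E) :
    ∃ y : ℝ → E, ∀ t ∈ Icc s T, y t = ψ + ∫ σ in Ioc s t, F σ (y σ) := by
  rcases lt_or_ge T s with hTs | hsT
  · exact ⟨0, fun t ht => absurd (ht.1.trans ht.2) hTs.not_ge⟩
  obtain ⟨N, hN⟩ := ((FloorSemiring.tendsto_pow_div_factorial_atTop
    (K * (T - s))).eventually_lt_const (by norm_num : (0 : ℝ) < 1 / 2)).exists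
  have hcontr : ContractingWith (1 / 2) (hF.picard hsT ψ)^[N] := by
    refine ⟨by rw [← NNReal.coe_lt_coe]; norm_num, LipschitzWith.of_dist_le_mul fun y z => ?_⟩
    refine (ContinuousMap.dist_le (by positivity)).2 fun t => ?_
    refine (hF.dist_picard_iterate_apply_le hsT ψ N y z t).trans ?_
    rw [show ((1 / 2 : ℝ≥0) : ℝ) = 1 / 2 by norm_num]
    gcongr ?_ * _
    refine le_trans ?_ hN.le
    gcongr
    · exact mul_nonneg K.2 (sub_nonneg.2 t.2.1)
    · exact t.2.2
  have hfix := hcontr.isFixedPt_fixedPoint_iterate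
  refine ⟨IccExtend hsT (hcontr.fixedPoint), fun t ht => ?_⟩
  rw [IccExtend_of_mem hsT _ ht]
  conv_lhs => rw [← hfix]
  rfl

end IsLipschitzCaratheodory

section MeasurableSelection

variable {α X : Type*} [MeasurableSpace α] [MetricSpace X] {U : α → Set X}

theorem measurable_infDist_of_isCompact (hUc : ∀ t, IsCompact (U t))
    (hUne : ∀ t, (U t).Nonempty)
    (hU : ∀ q r, MeasurableSet {t | (U t ∩ closedBall q r).Nonempty}) (q : X) :
    Measurable fun t => infDist q (U t) := by
  refine measurable_of_Iic fun r => ?_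
  convert hU q r using 1
  ext t
  simp only [mem_preimage, mem_Iic, mem_ofPred_eq]
  constructor
  · intro hr
    obtain ⟨p, hp, hpq⟩ := (hUc t).exists_infDist_eq_dist (hUne t) q
    exact ⟨p, hp, by rw [mem_closedBall, dist_comm, ← hpq]; exact hr⟩
  · rintro ⟨p, hp, hpq⟩
    exact (infDist_le_dist_of_mem hp).trans (by rwa [dist_comm, ← mem_closedBall])

variable [SecondCountableTopology X] [MeasurableSpace X] [BorelSpace X]

theorem exists_measurable_infDist_lt [Nonempty X] (hUne : ∀ t, (U t).Nonempty)
    (hd : ∀ q, Measurable fun t => infDist q (U t)) {w : α → X} (hw : Measurable w) {r : ℝ}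
    (hr : 0 < r) :
    ∃ w' : α → X, Measurable w' ∧
      ∀ t, infDist (w' t) (U t) < r ∧ dist (w' t) (w t) < infDist (w t) (U t) + r := by
  classical
  set e := TopologicalSpace.denseSeq X
  have hex : ∀ t, ∃ i, infDist (e i) (U t) < r ∧ dist (e i) (w t) < infDist (w t) (U t) + r := by
    intro t
    obtain ⟨p, hp, hwp⟩ := (infDist_lt_iff (hUne t)).1 (lt_add_of_pos_right
      (infDist (w t) (U t)) (half_pos hr))
    obtain ⟨i, hi⟩ := (TopologicalSpace.denseRange_denseSeq X).exists_dist_lt p (half_pos hr)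
    refine ⟨i, (infDist_le_dist_of_mem hp).trans_lt ?_, ?_⟩
    · rw [dist_comm]; linarith
    · calc dist (e i) (w t) ≤ dist p (e i) + dist p (w t) := dist_triangle_left _ _ _
        _ < r / 2 + (infDist (w t) (U t) + r / 2) := by rw [dist_comm p (w t)]; gcongr
        _ = infDist (w t) (U t) + r := by ring
  have hdw : Measurable fun t => infDist (w t) (U t) :=
    measurable_comp_of_caratheodory (F := fun t q => infDist q (U t)) hd
      (fun t => continuous_infDist_pt _) hw
  refine ⟨fun t => e (Nat.find (hex t)),
    measurable_from_top.comp (measurable_find hex fun i => ?_), fun t => Nat.find_spec (hex t)⟩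
  exact (measurableSet_lt (hd _) measurable_const).inter
    (measurableSet_lt (measurable_const.dist hw) (hdw.add_const r))

theorem exists_measurable_forall_mem [CompleteSpace X] (hUc : ∀ t, IsClosed (U t))
    (hUne : ∀ t, (U t).Nonempty)
    (hd : ∀ q, Measurable fun t => infDist q (U t)) :
    ∃ u : α → X, Measurable u ∧ ∀ t, u t ∈ U t := by
  rcases isEmpty_or_nonempty α with hα | ⟨⟨t₀⟩⟩
  · exact ⟨isEmptyElim, measurable_of_empty _, isEmptyElim⟩
  have : Nonempty X := ⟨(hUne t₀).some⟩
  choose! next hnext_meas hnext using fun (n : ℕ) (w : α → X) (hw : Measurable w) =>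
    exists_measurable_infDist_lt hUne hd hw (pow_pos (half_pos one_pos) n)
  let v : ℕ → α → X := fun n =>
    Nat.rec (next 0 fun _ => (hUne t₀).some) (fun n w => next (n + 1) w) n
  have hv_meas : ∀ n, Measurable (v n) := by
    intro n
    induction n with
    | zero => exact hnext_meas 0 _ measurable_const
    | succ n ih => exact hnext_meas (n + 1) _ ih
  have hv_inf : ∀ n t, infDist (v n t) (U t) < (1 / 2) ^ n := by
    intro n t
    cases n with
    | zero => exact (hnext 0 _ measurable_const t).1
    | succ n => exact (hnext (n + 1) _ (hv_meas n) t).1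
  have hv_dist : ∀ n t, dist (v n t) (v (n + 1) t) ≤ 2 * (1 / 2) ^ n := by
    intro n t
    rw [dist_comm]
    calc dist (v (n + 1) t) (v n t) ≤ infDist (v n t) (U t) + (1 / 2) ^ (n + 1) :=
          (hnext (n + 1) _ (hv_meas n) t).2.le
      _ ≤ (1 / 2) ^ n + (1 / 2) ^ (n + 1) := by gcongr; exact (hv_inf n t).le
      _ ≤ 2 * (1 / 2) ^ n := by
          rw [pow_succ]
          linarith [pow_nonneg (by norm_num : (0 : ℝ) ≤ 1 / 2) n]
  choose u hu using fun t => cauchySeq_tendsto_of_complete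
    (cauchySeq_of_le_geometric (1 / 2) 2 (by norm_num) (hv_dist · t))
  refine ⟨u, measurable_of_tendsto_metrizable hv_meas (tendsto_pi_nhds.2 hu), fun t => ?_⟩
  have hlim : Tendsto (fun n => infDist (v n t) (U t)) atTop (𝓝 0) :=
    squeeze_zero (fun _ => infDist_nonneg) (fun n => (hv_inf n t).le)
      (tendsto_pow_atTop_nhds_zero_of_lt_one (by norm_num) (by norm_num))
  rw [(hUc t).mem_iff_infDist_zero (hUne t)]
  exact tendsto_nhds_unique (((continuous_infDist_pt _).tendsto _).comp (hu t)) hlim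

end MeasurableSelection

section Control

variable {n m : ℕ} {Ω : Type*}
  {f : ℝ → EuclideanSpace ℝ (Fin n) → EuclideanSpace ℝ (Fin m) → Ω → EuclideanSpace ℝ (Fin n)}
  {K : ℝ≥0} {c : ℝ}

theorem isLipschitzCaratheodory_of_control {k : ℝ}
    (hfmeas : ∀ x u ω, Measurable fun t => f t x u ω)
    (hfcont : ∀ t ω, Continuous fun p : EuclideanSpace ℝ (Fin n) × EuclideanSpace ℝ (Fin m) =>
      f t p.1 p.2 ω)
    (hgrowth : ∀ t x u ω, ‖f t x u ω‖ ≤ c * (1 + ‖x‖))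
    (hLip : ∀ t x x' u ω, ‖f t x u ω - f t x' u ω‖ ≤ k * ‖x - x'‖)
    {v : ℝ → EuclideanSpace ℝ (Fin m)} (hv : Measurable v) (ω : Ω) :
    IsLipschitzCaratheodory (fun σ p => f σ p (v σ) ω) k.toNNReal c where
  measurable_apply p := measurable_comp_of_caratheodory
    (F := fun σ (q : EuclideanSpace ℝ (Fin n) × EuclideanSpace ℝ (Fin m)) => f σ q.1 q.2 ω)
    (fun q => hfmeas q.1 q.2 ω) (fun σ => hfcont σ ω) (measurable_const.prodMk hv)
  lipschitzWith σ := LipschitzWith.of_dist_le' fun p q => by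
    simpa only [dist_eq_norm] using hLip σ p q (v σ) ω
  norm_le σ p := hgrowth σ p (v σ) ω

variable [MeasurableSpace Ω] {U : ℝ → Set (EuclideanSpace ℝ (Fin m))} {s T : ℝ}
  {φ : Ω → EuclideanSpace ℝ (Fin n)} {x : ℝ → Ω → EuclideanSpace ℝ (Fin n)}
  {u : ℝ → EuclideanSpace ℝ (Fin m)}

theorem IsProcess.integrableOn
    (hf : ∀ v, Measurable v → ∀ ω, IsLipschitzCaratheodory (fun σ p => f σ p (v σ) ω) K c)
    (hxu : IsProcess f U s T φ x u) (ω : Ω) :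
    IntegrableOn (fun σ => f σ (x σ ω) (u σ) ω) (Ioc s T) :=
  integrableOn_of_eq_add_integral (hf u hxu.1 ω).norm_le
    ((hf u hxu.1 ω).measurable_apply (φ ω)).aestronglyMeasurable fun t ht => hxu.2.2 t ht ω

theorem IsProcess.norm_le
    (hf : ∀ v, Measurable v → ∀ ω, IsLipschitzCaratheodory (fun σ p => f σ p (v σ) ω) K c)
    (hxu : IsProcess f U s T φ x u) (ω : Ω) :
    ∀ t ∈ Icc s T, ‖x t ω‖ ≤ (1 + ‖φ ω‖) * exp (c * (T - s)) :=
  norm_le_of_eq_add_integral (hf u hxu.1 ω).nonneg (hxu.integrableOn hf ω)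
    (fun σ _ => (hf u hxu.1 ω).norm_le σ _) fun t ht => hxu.2.2 t ht ω

theorem IsProcess.exists_concat {s₂ : ℝ} {y : ℝ → Ω → EuclideanSpace ℝ (Fin n)}
    {v : ℝ → EuclideanSpace ℝ (Fin m)}
    (hf : ∀ v, Measurable v → ∀ ω, IsLipschitzCaratheodory (fun σ p => f σ p (v σ) ω) K c)
    (h12 : s ≤ s₂) (h2T : s₂ ≤ T)
    (hxu : IsProcess f U s s₂ φ x u) (hyv : IsProcess f U s₂ T (x s₂) y v) :
    ∃ z w, IsProcess f U s T φ z w ∧ z T = y T := by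
  refine ⟨fun t ω => if t ≤ s₂ then x t ω else y t ω, fun t => if t ≤ s₂ then u t else v t,
    ⟨hxu.1.ite measurableSet_Iic hyv.1, ?_, fun t ht ω => ?_⟩, ?_⟩
  · have hsub : Icc s T ⊆ Icc s s₂ ∪ Ioc s₂ T := fun t ht =>
      (le_or_gt t s₂).imp (fun h => ⟨ht.1, h⟩) fun h => ⟨h, ht.2⟩
    refine ae_restrict_of_ae_restrict_of_subset hsub ((ae_restrict_union_iff _ _ _).2 ⟨?_, ?_⟩)
    · filter_upwards [hxu.2.1, ae_restrict_mem measurableSet_Icc] with t hu ht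
      simpa only [if_pos ht.2] using hu
    · filter_upwards [ae_restrict_of_ae_restrict_of_subset Ioc_subset_Icc_self hyv.2.1,
        ae_restrict_mem measurableSet_Ioc] with t hv ht
      simpa only [if_neg (not_le.2 ht.1)] using hv
  · dsimp only
    rw [ite_eq_add_integral h12 (hxu.integrableOn hf ω) (hyv.integrableOn hf ω)
      (fun t ht => hxu.2.2 t ht ω) (fun t ht => hyv.2.2 t ht ω) t ht]
    congr 1
    refine setIntegral_congr_fun measurableSet_Ioc fun σ _ => ?_
    split_ifs <;> rfl
  · funext ω
    dsimp only
    split_ifs with hT2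
    · obtain rfl : s₂ = T := le_antisymm h2T hT2
      simp [hyv.2.2 s₂ ⟨le_rfl, le_rfl⟩ ω]
    · rfl

theorem exists_isProcess
    (hf : ∀ v, Measurable v → ∀ ω, IsLipschitzCaratheodory (fun σ p => f σ p (v σ) ω) K c)
    (hUcpt : ∀ t, IsCompact (U t)) (hUne : ∀ t, (U t).Nonempty)
    (hU : ∀ q r, MeasurableSet {t | (U t ∩ closedBall q r).Nonempty})
    (ψ : Ω → EuclideanSpace ℝ (Fin n)) :
    ∃ x u, IsProcess f U s T ψ x u := by
  obtain ⟨v, hv, hvU⟩ := exists_measurable_forall_mem (fun t => (hUcpt t).isClosed) hUne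
    (measurable_infDist_of_isCompact hUcpt hUne hU)
  choose y hy using fun ω => (hf v hv ω).exists_eq_add_integral (s := s) (T := T) (ψ ω)
  exact ⟨fun t ω => y ω t, v, hv, ae_of_all _ hvU, fun t ht ω => hy ω t ht⟩

theorem bddBelow_termCost {μ : Measure Ω} [IsFiniteMeasure μ]
    {g : EuclideanSpace ℝ (Fin n) → Ω → ℝ} {a : Ω → ℝ} {b : ℝ}
    (hf : ∀ v, Measurable v → ∀ ω, IsLipschitzCaratheodory (fun σ p => f σ p (v σ) ω) K c)
    (hsT : s ≤ T)
    (ha : Integrable a μ) (hb : 0 ≤ b) (hg : ∀ x ω, a ω - b * ‖x‖ ^ 2 ≤ g x ω)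
    (hφ : Integrable (fun ω => ‖φ ω‖ ^ 2) μ) :
    BddBelow {r | ∃ x u, IsProcess f U s T φ x u ∧ r = termCost μ g (x T)} := by
  set D := exp (c * (T - s))
  have hm : Integrable (fun ω => a ω - b * D ^ 2 * (2 + 2 * ‖φ ω‖ ^ 2)) μ :=
    ha.sub (((integrable_const 2).add (hφ.const_mul 2)).const_mul _)
  refine ⟨min 0 (∫ ω, a ω - b * D ^ 2 * (2 + 2 * ‖φ ω‖ ^ 2) ∂μ), ?_⟩
  rintro r ⟨x, u, hxu, rfl⟩
  -- a non-integrable terminal cost has the junk value `0`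
  by_cases hint : Integrable (fun ω => g (x T ω) ω) μ
  · refine (min_le_right _ _).trans (integral_mono hm hint fun ω => ?_)
    have hx := hxu.norm_le hf ω T ⟨hsT, le_rfl⟩
    have hsq : ‖x T ω‖ ^ 2 ≤ D ^ 2 * (2 + 2 * ‖φ ω‖ ^ 2) := by
      calc ‖x T ω‖ ^ 2 ≤ ((1 + ‖φ ω‖) * D) ^ 2 := by gcongr
        _ ≤ D ^ 2 * (2 + 2 * ‖φ ω‖ ^ 2) := by nlinarith [sq_nonneg (1 - ‖φ ω‖), sq_nonneg D]
    nlinarith [hg (x T ω) ω, mul_le_mul_of_nonneg_left hsq hb]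
  · rw [termCost, integral_undef hint]
    exact min_le_left _ _

end Control

theorem stmt_3_general {n m : ℕ} {Ω : Type*} [MeasurableSpace Ω]
    (μ : Measure Ω) [IsFiniteMeasure μ]
    (T c k : ℝ)
    (f : ℝ → EuclideanSpace ℝ (Fin n) → EuclideanSpace ℝ (Fin m) → Ω →
      EuclideanSpace ℝ (Fin n))
    (U : ℝ → Set (EuclideanSpace ℝ (Fin m)))
    (g : EuclideanSpace ℝ (Fin n) → Ω → ℝ)
    -- (H)(ii): U upper semicontinuous with nonempty compact values in a compact set
    (hUcpt : ∀ t, IsCompact (U t)) (hUne : ∀ t, (U t).Nonempty)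
    (hUusc : ∀ F : Set (EuclideanSpace ℝ (Fin m)), IsClosed F →
      IsClosed {t : ℝ | (U t ∩ F).Nonempty})
    -- (H)(iii): f measurable in t, continuous in (x,u), linear growth, Lipschitz in x
    (hfmeas : ∀ x u ω, Measurable fun t => f t x u ω)
    (hfcont : ∀ t ω, Continuous fun p : EuclideanSpace ℝ (Fin n) × EuclideanSpace ℝ (Fin m) =>
      f t p.1 p.2 ω)
    (hgrowth : ∀ t x u ω, ‖f t x u ω‖ ≤ c * (1 + ‖x‖))
    (hLip : ∀ t x x' u ω, ‖f t x u ω - f t x' u ω‖ ≤ k * ‖x - x'‖)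
    -- (H)(iv): g is a normal integrand bounded below by `a(ω) − b|x|²`
    (hgbound : ∃ a : Ω → ℝ, Integrable a μ ∧ ∃ b : ℝ, 0 ≤ b ∧
      ∀ x ω, a ω - b * ‖x‖ ^ 2 ≤ g x ω)
    (φ : Ω → EuclideanSpace ℝ (Fin n)) (hφ : Integrable (fun ω => ‖φ ω‖ ^ 2) μ)
    (s₁ s₂ : ℝ) (h12 : s₁ ≤ s₂) (h2T : s₂ ≤ T)
    (x : ℝ → Ω → EuclideanSpace ℝ (Fin n)) (u : ℝ → EuclideanSpace ℝ (Fin m))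
    (hxu : IsProcess f U s₁ s₂ φ x u) :
    valueFn μ f U g T s₁ φ ≤ valueFn μ f U g T s₂ (x s₂) := by
  obtain ⟨a, ha, b, hb, hg⟩ := hgbound
  have hf := fun v (hv : Measurable v) ω =>
    isLipschitzCaratheodory_of_control hfmeas hfcont hgrowth hLip hv ω
  obtain ⟨y, v, hyv⟩ := exists_isProcess hf hUcpt hUne
    (fun q r => (hUusc _ isClosed_closedBall).measurableSet) (s := s₂) (T := T) (x s₂)
  refine csInf_le_csInf (bddBelow_termCost hf (h12.trans h2T) ha hb hg hφ)
    ⟨_, y, v, hyv, rfl⟩ ?_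
  rintro r ⟨y, v, hyv, rfl⟩
  obtain ⟨z, w, hzw, hzT⟩ := hxu.exists_concat hf h12 h2T hyv
  exact ⟨z, w, hzw, by rw [hzT]⟩

/-- Dynamic Programming Principle, monotonicity part: under the standing
hypotheses (H), for every `φ ∈ L²(μ,Ω;ℝⁿ)`, every `0 ≤ s₁ ≤ s₂ ≤ T` and every admissible
control `u` on `[s₁,s₂]` with trajectory `x` starting from `φ`, one has
`V(s₁,φ) ≤ V(s₂, x(s₂,·))`. -/
theorem stmt_3 {n m : ℕ} {Ω : Type*} [MeasurableSpace Ω]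
    (μ : Measure Ω) [IsFiniteMeasure μ]
    (T c k : ℝ) (hT : 0 < T) (hc : 0 < c) (hk : 0 < k)
    (f : ℝ → EuclideanSpace ℝ (Fin n) → EuclideanSpace ℝ (Fin m) → Ω →
      EuclideanSpace ℝ (Fin n))
    (U : ℝ → Set (EuclideanSpace ℝ (Fin m)))
    (g : EuclideanSpace ℝ (Fin n) → Ω → ℝ)
    -- (H)(ii): U upper semicontinuous with nonempty compact values in a compact set
    (hUcpt : ∀ t, IsCompact (U t)) (hUne : ∀ t, (U t).Nonempty)
    (hUbd : ∃ K : Set (EuclideanSpace ℝ (Fin m)), IsCompact K ∧ ∀ t, U t ⊆ K)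
    (hUusc : ∀ F : Set (EuclideanSpace ℝ (Fin m)), IsClosed F →
      IsClosed {t : ℝ | (U t ∩ F).Nonempty})
    -- (H)(iii): f measurable in t, continuous in (x,u), linear growth, Lipschitz in x
    (hfmeas : ∀ x u ω, Measurable fun t => f t x u ω)
    (hfcont : ∀ t ω, Continuous fun p : EuclideanSpace ℝ (Fin n) × EuclideanSpace ℝ (Fin m) =>
      f t p.1 p.2 ω)
    (hgrowth : ∀ t x u ω, ‖f t x u ω‖ ≤ c * (1 + ‖x‖))
    (hLip : ∀ t x x' u ω, ‖f t x u ω - f t x' u ω‖ ≤ k * ‖x - x'‖)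
    -- (H)(iv): g is a normal integrand bounded below by `a(ω) − b|x|²`
    (hglsc : ∀ ω, LowerSemicontinuous fun x => g x ω)
    (hgbound : ∃ a : Ω → ℝ, Integrable a μ ∧ ∃ b : ℝ, 0 ≤ b ∧
      ∀ x ω, a ω - b * ‖x‖ ^ 2 ≤ g x ω)
    (φ : Ω → EuclideanSpace ℝ (Fin n)) (hφ : Integrable (fun ω => ‖φ ω‖ ^ 2) μ)
    (s₁ s₂ : ℝ) (h0 : 0 ≤ s₁) (h12 : s₁ ≤ s₂) (h2T : s₂ ≤ T)
    (x : ℝ → Ω → EuclideanSpace ℝ (Fin n)) (u : ℝ → EuclideanSpace ℝ (Fin m))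
    (hxu : IsProcess f U s₁ s₂ φ x u) :
    valueFn μ f U g T s₁ φ ≤ valueFn μ f U g T s₂ (x s₂) :=
  stmt_3_general μ T c k f U g hUcpt hUne hUusc hfmeas hfcont hgrowth hLip hgbound φ hφ s₁ s₂ h12
    h2T x u hxu
end

section
/- (Filippov measurable selection for the controlled ODE) Let U : [0,T] ⇝ ℝᵐ be a measurable multifunction with closed values, and suppose f(t,·,·) is measurable for a.e. t and the curve x satisfies ẋ(t) ∈ f(t, x(t), U(t)) a.e. t ∈ [s,T]. Then there exists a measurable control u : [s,T] → ℝᵐ with u(t) ∈ U(t) a.e. and ẋ(t) = f(t, x(t), u(t)) a.e. t ∈ [s,T]. -/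
/-!
Off a null set, `x'` equals `deriv x`, which is Borel for every `x`, the curve `x` agrees with a
Borel version `x̃` (it is continuous almost everywhere), and `f t (x̃ t) ·` is continuous. There
the admissible controls `{u ∈ U t | f t (x̃ t) u = x' t}` form a nonempty closed-valued
multifunction, which is measurable: by compactness it meets a closed bounded `F` iff some member
of a Castaing representation of `U ∩ F` makes `‖f t (x̃ t) u - x' t‖` arbitrarily small. The
Kuratowski–Ryll-Nardzewski theorem, proved by dyadic approximation along a dense sequence, then
yields a measurable selection.
-/

open MeasureTheory Set Metric Filter Topology Function

theorem aemeasurable_of_ae_continuousAt {α β : Type*} [TopologicalSpace α] [MeasurableSpace α]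
    [OpensMeasurableSpace α] [TopologicalSpace β] [MeasurableSpace β] [BorelSpace β]
    {μ : Measure α} {g : α → β} (h : ∀ᵐ t ∂μ, ContinuousAt g t) : AEMeasurable g μ := by
  obtain ⟨s, hs_ae, hs, hcont⟩ := h.exists_measurable_mem
  rw [← Measure.restrict_eq_self_of_ae_mem hs_ae]
  exact ContinuousOn.aemeasurable (fun t ht => (hcont t ht).continuousWithinAt) hs

theorem exists_measurable_nat_mem {α : Type*} [MeasurableSpace α] {A : ℕ → Set α}
    (hA : ∀ n, MeasurableSet (A n)) (hcover : ∀ t, ∃ n, t ∈ A n) :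
    ∃ w : α → ℕ, Measurable w ∧ ∀ t, t ∈ A (w t) := by
  classical
  exact ⟨fun t => Nat.find (hcover t), measurable_find hcover hA,
    fun t => Nat.find_spec (hcover t)⟩

section InterOrSelf

variable {α E : Type*} {Γ : α → Set E} {F : Set E}

open Classical in
def interOrSelf (Γ : α → Set E) (F : Set E) (t : α) : Set E :=
  if (Γ t ∩ F).Nonempty then Γ t ∩ F else Γ t

theorem interOrSelf_of_nonempty {t : α} (h : (Γ t ∩ F).Nonempty) :
    interOrSelf Γ F t = Γ t ∩ F :=
  if_pos h

theorem interOrSelf_subset (Γ : α → Set E) (F : Set E) (t : α) : interOrSelf Γ F t ⊆ Γ t := by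
  unfold interOrSelf
  split_ifs
  exacts [inter_subset_left, subset_rfl]

theorem interOrSelf_nonempty (hne : ∀ t, (Γ t).Nonempty) (F : Set E) (t : α) :
    (interOrSelf Γ F t).Nonempty := by
  unfold interOrSelf
  split_ifs with h
  exacts [h, hne t]

theorem isClosed_interOrSelf [TopologicalSpace E] (hcl : ∀ t, IsClosed (Γ t)) (hF : IsClosed F)
    (t : α) : IsClosed (interOrSelf Γ F t) := by
  unfold interOrSelf
  split_ifs
  exacts [(hcl t).inter hF, hcl t]

end InterOrSelf

section Multifunction

variable {α E : Type*} [MeasurableSpace α] [MetricSpace E]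

/-- Tested on closed bounded sets only: that is all the selection theorem needs, and what
compactness of the values delivers in a proper space. -/
def IsMeasurableMultifunction (Γ : α → Set E) : Prop :=
  ∀ F : Set E, IsClosed F → Bornology.IsBounded F → MeasurableSet {t | (Γ t ∩ F).Nonempty}

namespace IsMeasurableMultifunction

variable {Γ : α → Set E}

theorem measurableSet_inter_inter (hΓ : IsMeasurableMultifunction Γ) {F C : Set E}
    (hF : IsClosed F) (hFb : Bornology.IsBounded F) (hC : IsClosed C) :
    MeasurableSet {t | (Γ t ∩ F ∩ C).Nonempty} := by
  simpa only [inter_assoc] using hΓ _ (hF.inter hC) (hFb.subset inter_subset_left)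

theorem interOrSelf (hΓ : IsMeasurableMultifunction Γ) {F : Set E} (hF : IsClosed F)
    (hFb : Bornology.IsBounded F) : IsMeasurableMultifunction (interOrSelf Γ F) := by
  intro C hC hCb
  convert (hΓ F hF hFb).ite (hΓ.measurableSet_inter_inter hF hFb hC) (hΓ C hC hCb) using 1
  ext t
  by_cases h : (Γ t ∩ F).Nonempty <;> simp [_root_.interOrSelf, h, Set.ite]

theorem inter_closedBall_comp (hΓ : IsMeasurableMultifunction Γ) {d : ℕ → E} {v : α → ℕ}
    (hv : Measurable v) (r : ℝ) :
    IsMeasurableMultifunction fun t => Γ t ∩ closedBall (d (v t)) r := by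
  intro F hF _
  have : {t | (Γ t ∩ closedBall (d (v t)) r ∩ F).Nonempty} =
      ⋃ j, v ⁻¹' {j} ∩ {t | (Γ t ∩ closedBall (d j) r ∩ F).Nonempty} := by
    ext t
    simp
  rw [this]
  exact .iUnion fun j => (hv (measurableSet_singleton j)).inter
    (hΓ.measurableSet_inter_inter isClosed_closedBall isBounded_closedBall hF)

theorem exists_measurable_index (hΓ : IsMeasurableMultifunction Γ) (hne : ∀ t, (Γ t).Nonempty)
    {d : ℕ → E} (hd : DenseRange d) {r : ℝ} (hr : 0 < r) :
    ∃ v : α → ℕ, Measurable v ∧ ∀ t, (Γ t ∩ closedBall (d (v t)) r).Nonempty := by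
  refine exists_measurable_nat_mem (fun n => hΓ _ isClosed_closedBall isBounded_closedBall)
    fun t => ?_
  obtain ⟨z, hz⟩ := hne t
  obtain ⟨n, hn⟩ := hd.exists_dist_lt z hr
  exact ⟨n, z, hz, mem_closedBall.2 (dist_comm z (d n) ▸ hn.le)⟩

end IsMeasurableMultifunction

end Multifunction

section Selection

variable {α E : Type*} [MeasurableSpace α] [MetricSpace E] [CompleteSpace E] [MeasurableSpace E]
  [BorelSpace E] {Γ : α → Set E}

theorem exists_measurable_selection_of_approx (hcl : ∀ t, IsClosed (Γ t)) {c : ℕ → α → E}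
    (hc : ∀ k, Measurable (c k)) (hΓc : ∀ k t, (Γ t ∩ closedBall (c k t) (2⁻¹ ^ k)).Nonempty)
    (hcc : ∀ k t, dist (c k t) (c (k + 1) t) ≤ 2 * 2⁻¹ ^ k) :
    ∃ σ : α → E, Measurable σ ∧ ∀ t, σ t ∈ Γ t := by
  choose σ hσ using fun t =>
    cauchySeq_tendsto_of_complete (cauchySeq_of_le_geometric _ _ (by norm_num) (hcc · t))
  refine ⟨σ, measurable_of_tendsto_metrizable hc (tendsto_pi_nhds.2 hσ), fun t => ?_⟩
  have hinfDist : Tendsto (fun k => infDist (c k t) (Γ t)) atTop (𝓝 0) := by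
    refine squeeze_zero (fun k => infDist_nonneg) (fun k => ?_)
      (tendsto_pow_atTop_nhds_zero_of_lt_one (r := (2⁻¹ : ℝ)) (by norm_num) (by norm_num))
    obtain ⟨z, hzΓ, hz⟩ := hΓc k t
    exact (infDist_le_dist_of_mem hzΓ).trans (mem_closedBall'.1 hz)
  rw [(hcl t).mem_iff_infDist_zero ((hΓc 0 t).mono inter_subset_left)]
  exact tendsto_nhds_unique (((continuous_infDist_pt _).tendsto _).comp (hσ t)) hinfDist

variable [TopologicalSpace.SeparableSpace E] [Nonempty E]

/-- The Kuratowski–Ryll-Nardzewski selection theorem. -/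
theorem IsMeasurableMultifunction.exists_measurable_selection (hΓ : IsMeasurableMultifunction Γ)
    (hne : ∀ t, (Γ t).Nonempty) (hcl : ∀ t, IsClosed (Γ t)) :
    ∃ σ : α → E, Measurable σ ∧ ∀ t, σ t ∈ Γ t := by
  obtain ⟨d, hd⟩ := TopologicalSpace.exists_dense_seq E
  let S (k : ℕ) := {v : α → ℕ //
    Measurable v ∧ ∀ t, (Γ t ∩ closedBall (d (v t)) (2⁻¹ ^ k)).Nonempty}
  have refine_index : ∀ k (v : S k), ∃ w : S (k + 1), ∀ t,
      (Γ t ∩ closedBall (d (v.1 t)) (2⁻¹ ^ k) ∩ closedBall (d (w.1 t)) (2⁻¹ ^ (k + 1))).Nonempty := by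
    rintro k ⟨v, hv, hvΓ⟩
    obtain ⟨w, hw, hwΓ⟩ :=
      (hΓ.inter_closedBall_comp hv _).exists_measurable_index hvΓ hd
        (r := 2⁻¹ ^ (k + 1)) (by positivity)
    exact ⟨⟨w, hw, fun t => (hwΓ t).mono (inter_subset_inter_left _ inter_subset_left)⟩, hwΓ⟩
  choose next hnext using refine_index
  obtain ⟨v₀, hv₀, hv₀Γ⟩ := hΓ.exists_measurable_index hne hd (r := 2⁻¹ ^ 0) (by norm_num)
  let v (k : ℕ) : S k := Nat.rec ⟨v₀, hv₀, hv₀Γ⟩ next k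
  refine exists_measurable_selection_of_approx hcl (c := fun k t => d ((v k).1 t))
    (fun k => measurable_from_top.comp (v k).2.1) (fun k => (v k).2.2) fun k t => ?_
  obtain ⟨z, ⟨-, hz₁⟩, hz₂⟩ := hnext k (v k) t
  calc dist (d ((v k).1 t)) (d ((v (k + 1)).1 t))
      ≤ dist (d ((v k).1 t)) z + dist z (d ((v (k + 1)).1 t)) := dist_triangle _ _ _
    _ ≤ 2⁻¹ ^ k + 2⁻¹ ^ (k + 1) := add_le_add (mem_closedBall'.1 hz₁) hz₂
    _ ≤ 2 * 2⁻¹ ^ k := by rw [pow_succ]; linarith [pow_nonneg (by norm_num : (0 : ℝ) ≤ 2⁻¹) k]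

/-- A Castaing representation. -/
theorem IsMeasurableMultifunction.exists_dense_measurable_selections
    (hΓ : IsMeasurableMultifunction Γ) (hne : ∀ t, (Γ t).Nonempty) (hcl : ∀ t, IsClosed (Γ t)) :
    ∃ σ : ℕ × ℕ → α → E, (∀ i, Measurable (σ i)) ∧ (∀ i t, σ i t ∈ Γ t) ∧
      ∀ t, Γ t ⊆ closure (range fun i => σ i t) := by
  obtain ⟨d, hd⟩ := TopologicalSpace.exists_dense_seq E
  choose σ hσ hσΓ using fun i : ℕ × ℕ =>
    (hΓ.interOrSelf (F := closedBall (d i.1) (1 / (i.2 + 1))) isClosed_closedBall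
      isBounded_closedBall).exists_measurable_selection (interOrSelf_nonempty hne _)
      (isClosed_interOrSelf hcl isClosed_closedBall)
  refine ⟨σ, hσ, fun i t => interOrSelf_subset _ _ _ (hσΓ i t),
    fun t z hz => Metric.mem_closure_iff.2 fun ε hε => ?_⟩
  obtain ⟨j, hj⟩ := exists_nat_one_div_lt (half_pos hε)
  obtain ⟨i, hi⟩ := hd.exists_dist_lt z (Nat.one_div_pos_of_nat (n := j))
  have hσij : σ (i, j) t ∈ closedBall (d i) (1 / (j + 1)) := by
    have hz' : z ∈ Γ t ∩ closedBall (d i) (1 / (j + 1)) := ⟨hz, mem_closedBall.2 hi.le⟩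
    exact (interOrSelf_of_nonempty ⟨z, hz'⟩ ▸ hσΓ (i, j) t).2
  refine ⟨_, ⟨(i, j), rfl⟩, ?_⟩
  calc dist z (σ (i, j) t) ≤ dist z (d i) + dist (d i) (σ (i, j) t) := dist_triangle _ _ _
    _ < 1 / (j + 1) + 1 / (j + 1) := add_lt_add_of_lt_of_le hi (mem_closedBall'.1 hσij)
    _ < ε := by linarith

end Selection

section Filippov

variable {α E : Type*} [MeasurableSpace α] [MetricSpace E] [ProperSpace E] [Nonempty E]
  [MeasurableSpace E] [BorelSpace E] {Γ : α → Set E}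

theorem IsMeasurableMultifunction.setOf_nonpos (hΓ : IsMeasurableMultifunction Γ)
    (hne : ∀ t, (Γ t).Nonempty) (hcl : ∀ t, IsClosed (Γ t)) {φ : α → E → ℝ}
    (hφ : Measurable (uncurry φ)) (hφc : ∀ t, Continuous (φ t)) :
    IsMeasurableMultifunction fun t => {u ∈ Γ t | φ t u ≤ 0} := by
  intro F hF hFb
  obtain ⟨σ, hσ, hσΓ, hσdense⟩ := (hΓ.interOrSelf hF hFb).exists_dense_measurable_selections
    (interOrSelf_nonempty hne F) (isClosed_interOrSelf hcl hF)
  -- `φ t` attains its minimum on the compact set `Γ t ∩ F`, and the dense sequence `σ · t`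
  -- approaches that minimum
  have hchar : {t | ({u ∈ Γ t | φ t u ≤ 0} ∩ F).Nonempty} = {t | (Γ t ∩ F).Nonempty} ∩
      ⋂ k : ℕ, ⋃ i, {t | φ t (σ i t) < 1 / (k + 1)} := by
    ext t
    simp only [mem_ofPred_eq, mem_inter_iff, mem_iInter, mem_iUnion]
    constructor
    · rintro ⟨u, ⟨huΓ, hφu⟩, huF⟩
      have hΓF : (Γ t ∩ F).Nonempty := ⟨u, huΓ, huF⟩
      refine ⟨hΓF, fun k => ?_⟩
      have hu : u ∈ closure (range fun i => σ i t) :=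
        hσdense t (interOrSelf_of_nonempty hΓF ▸ ⟨huΓ, huF⟩)
      obtain ⟨_, hlt, i, rfl⟩ := mem_closure_iff.1 hu _
        (isOpen_lt (hφc t) continuous_const) (hφu.trans_lt Nat.one_div_pos_of_nat)
      exact ⟨i, hlt⟩
    · rintro ⟨hΓF, hsmall⟩
      have hσF : ∀ i, σ i t ∈ Γ t ∩ F := fun i => interOrSelf_of_nonempty hΓF ▸ hσΓ i t
      obtain ⟨a, ⟨haΓ, haF⟩, hmin⟩ :=
        (isCompact_of_isClosed_isBounded ((hcl t).inter hF) (hFb.subset inter_subset_right))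
          |>.exists_isMinOn hΓF (hφc t).continuousOn
      refine ⟨a, ⟨haΓ, not_lt.1 fun hpos => ?_⟩, haF⟩
      obtain ⟨k, hk⟩ := exists_nat_one_div_lt hpos
      obtain ⟨i, hi⟩ := hsmall k
      exact (hmin (hσF i)).not_gt (hi.trans hk)
  rw [hchar]
  exact (hΓ F hF hFb).inter <| .iInter fun k => .iUnion fun i =>
    measurableSet_lt (hφ.comp (measurable_id.prodMk (hσ i))) measurable_const

/-- Filippov's lemma. -/
theorem IsMeasurableMultifunction.exists_measurable_selection_of_mem_image
    {F : Type*} [MetricSpace F] [SecondCountableTopology F] [MeasurableSpace F] [BorelSpace F]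
    (hΓ : IsMeasurableMultifunction Γ) (hne : ∀ t, (Γ t).Nonempty) (hcl : ∀ t, IsClosed (Γ t))
    {g : α → E → F} (hg : Measurable (uncurry g)) {y : α → F} (hy : Measurable y)
    {A : Set α} (hA : MeasurableSet A) (hgc : ∀ t ∈ A, Continuous (g t))
    (hsol : ∀ t ∈ A, y t ∈ g t '' Γ t) :
    ∃ σ : α → E, Measurable σ ∧ ∀ t, σ t ∈ Γ t ∧ (t ∈ A → g t (σ t) = y t) := by
  classical
  -- the constraint `g t u = y t` is imposed only on `A`, where `g t` is continuous
  let φ (t : α) (u : E) : ℝ := if t ∈ A then dist (g t u) (y t) else 0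
  have hφ : Measurable (uncurry φ) :=
    Measurable.ite (measurable_fst hA) (hg.dist (hy.comp measurable_fst)) measurable_const
  have hφc (t : α) : Continuous (φ t) := by
    by_cases ht : t ∈ A
    · simpa only [φ, ht, if_true] using (hgc t ht).dist continuous_const
    · simpa only [φ, ht, if_false] using continuous_const
  have hne' (t : α) : ({u ∈ Γ t | φ t u ≤ 0}).Nonempty := by
    by_cases ht : t ∈ A
    · obtain ⟨u, huΓ, hu⟩ := hsol t ht
      exact ⟨u, huΓ, by simp [φ, ht, hu]⟩
    · obtain ⟨u, huΓ⟩ := hne t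
      exact ⟨u, huΓ, by simp [φ, ht]⟩
  obtain ⟨σ, hσ, hσΓ⟩ := (hΓ.setOf_nonpos hne hcl hφ hφc).exists_measurable_selection hne'
    fun t => (hcl t).inter (isClosed_le (hφc t) continuous_const)
  refine ⟨σ, hσ, fun t => ⟨(hσΓ t).1, fun ht => ?_⟩⟩
  have h := (hσΓ t).2
  simp only [φ, ht, if_true] at h
  exact dist_le_zero.1 h

end Filippov

theorem stmt_19_general {n m : ℕ} (s T : ℝ)
    (U : ℝ → Set (EuclideanSpace ℝ (Fin m)))
    (hUne : ∀ t, (U t).Nonempty)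
    (hUclosed : ∀ t, IsClosed (U t))
    (hUmeas : ∀ F : Set (EuclideanSpace ℝ (Fin m)), IsClosed F →
      MeasurableSet {t : ℝ | (U t ∩ F).Nonempty})
    (f : ℝ → EuclideanSpace ℝ (Fin n) → EuclideanSpace ℝ (Fin m) →
      EuclideanSpace ℝ (Fin n))
    (hfmeas : Measurable fun q : ℝ × EuclideanSpace ℝ (Fin n) × EuclideanSpace ℝ (Fin m) =>
      f q.1 q.2.1 q.2.2)
    (hfcont : ∀ᵐ t ∂(volume.restrict (Icc s T)),
      ∀ x : EuclideanSpace ℝ (Fin n), Continuous fun u => f t x u)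
    (x x' : ℝ → EuclideanSpace ℝ (Fin n))
    (hx : ∀ᵐ t ∂(volume.restrict (Icc s T)),
      HasDerivAt x (x' t) t ∧ x' t ∈ (fun u => f t (x t) u) '' U t) :
    ∃ u : ℝ → EuclideanSpace ℝ (Fin m), Measurable u ∧
      ∀ᵐ t ∂(volume.restrict (Icc s T)), u t ∈ U t ∧ x' t = f t (x t) (u t) := by
  obtain ⟨xm, hxm, hx_eq⟩ : AEMeasurable x (volume.restrict (Icc s T)) :=
    aemeasurable_of_ae_continuousAt (hx.mono fun t ht => ht.1.continuousAt)
  obtain ⟨A, hA_ae, hA, hA_good⟩ := (hx.and (hx_eq.and hfcont)).exists_measurable_mem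
  obtain ⟨u, hu, huU⟩ := IsMeasurableMultifunction.exists_measurable_selection_of_mem_image
    (fun F hF _ => hUmeas F hF) hUne hUclosed (g := fun t v => f t (xm t) v) (y := deriv x)
    (hfmeas.comp (measurable_fst.prodMk ((hxm.comp measurable_fst).prodMk measurable_snd)))
    (measurable_deriv x) hA (fun t ht => (hA_good t ht).2.2 (xm t)) fun t ht => by
      obtain ⟨⟨hderiv, hsol⟩, hxt, -⟩ := hA_good t ht
      rwa [hderiv.deriv, ← hxt]
  refine ⟨u, hu, ?_⟩
  filter_upwards [hA_ae] with t ht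
  obtain ⟨⟨hderiv, -⟩, hxt, -⟩ := hA_good t ht
  refine ⟨(huU t).1, ?_⟩
  rw [← hderiv.deriv, ← (huU t).2 ht, hxt]

/-- Filippov measurable selection for the controlled ODE: if
`U : [0,T] ⇝ ℝᵐ` is a measurable multifunction with closed values, `f` is jointly
measurable and continuous in `u` for a.e. `t`, and the absolutely continuous curve `x`
satisfies `ẋ(t) ∈ f(t, x(t), U(t))` a.e. on `[s,T]`, then there is a measurable
control `u` with `u(t) ∈ U(t)` and `ẋ(t) = f(t, x(t), u(t))` a.e. on `[s,T]`. -/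
theorem stmt_19 {n m : ℕ} (s T : ℝ) (hsT : s ≤ T)
    (U : ℝ → Set (EuclideanSpace ℝ (Fin m)))
    (hUne : ∀ t, (U t).Nonempty)
    (hUclosed : ∀ t, IsClosed (U t))
    (hUmeas : ∀ F : Set (EuclideanSpace ℝ (Fin m)), IsClosed F →
      MeasurableSet {t : ℝ | (U t ∩ F).Nonempty})
    (f : ℝ → EuclideanSpace ℝ (Fin n) → EuclideanSpace ℝ (Fin m) →
      EuclideanSpace ℝ (Fin n))
    (hfmeas : Measurable fun q : ℝ × EuclideanSpace ℝ (Fin n) × EuclideanSpace ℝ (Fin m) =>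
      f q.1 q.2.1 q.2.2)
    (hfcont : ∀ᵐ t ∂(volume.restrict (Icc s T)),
      ∀ x : EuclideanSpace ℝ (Fin n), Continuous fun u => f t x u)
    (x x' : ℝ → EuclideanSpace ℝ (Fin n))
    (hx : ∀ᵐ t ∂(volume.restrict (Icc s T)),
      HasDerivAt x (x' t) t ∧ x' t ∈ (fun u => f t (x t) u) '' U t) :
    ∃ u : ℝ → EuclideanSpace ℝ (Fin m), Measurable u ∧
      ∀ᵐ t ∂(volume.restrict (Icc s T)), u t ∈ U t ∧ x' t = f t (x t) (u t) :=
  stmt_19_general s T U hUne hUclosed hUmeas f hfmeas hfcont x x' hx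
end
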